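/- Fix d ≥ 1, a real matrix A, and a time-symmetric second-order real basic method S for A. Let n ≥ 2 and let α_1, …, α_s ∈ ℂ be left-right palindromic, i.e. α_{s+1−j} = α_j for all j, with α_1 + ⋯ + α_s = 1, and suppose the composition P(h) = S(α_s h)·S(α_{s−1} h)⋯S(α_1 h) is of order 2n, i.e. (fun h : ℝ => P(h) − exp(h·A)) is O(h^{2n+1}) as h → 0. Let R(h) be the entrywise real part of P(h). Then (fun h : ℝ => R(h) − exp(h·A)) is O(h^{2n+1}) as h → 0 (R is of order 2n), and R is pseudo-symmetric of order 4n+1, i.e. (fun h : ℝ => R(−h)·R(h) − 1) is O(h^{4n+2}) as h → 0. -/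

import Mathlib

/-!
Palindromy and time-symmetry give `P (-h) * P h = 1`, hence also `P̄ (-h) * P̄ h = 1` for the
entrywise conjugate `P̄`. As `exp (h A)` is real, `P̄` approximates it as well as `P` does, so the
real part `R = (P + P̄) / 2` is of order `2n` and the imaginary part `P - P̄` is `O(h^(2n+1))`.
Expanding the products, `R (-h) * R h - 1 = -¼ (P (-h) - P̄ (-h)) (P h - P̄ h)`, a product of two
`O(h^(2n+1))` factors.
-/

open Matrix Asymptotics Filter NormedSpace

attribute [local instance] Matrix.normedAddCommGroup Matrix.normedSpace

open scoped Topology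

theorem List.prod_map_mul_prod_map_reverse_eq_one {ι M : Type*} [Monoid M] (l : List ι)
    {f g : ι → M} (hfg : ∀ i, f i * g i = 1) : (l.map f).prod * (l.map g).reverse.prod = 1 := by
  induction l with
  | nil => simp
  | cons a l ih =>
    simp only [List.map_cons, List.reverse_cons, List.prod_append, List.prod_cons, List.prod_nil,
      mul_one]
    calc f a * (l.map f).prod * ((l.map g).reverse.prod * g a)
        = f a * ((l.map f).prod * (l.map g).reverse.prod) * g a := by simp only [mul_assoc]
      _ = 1 := by rw [ih, mul_one, hfg]

theorem prod_ofFn_neg_mul_prod_ofFn_eq_one {K M : Type*} [Mul K] [HasDistribNeg K] [Monoid M]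
    {S : K → M} (hS : ∀ z, S z * S (-z) = 1) {s : ℕ} {α : Fin s → K}
    (hα : ∀ j, α j.rev = α j) (h : K) :
    (List.ofFn fun j => S (α j * -h)).reverse.prod *
      (List.ofFn fun j => S (α j * h)).reverse.prod = 1 := by
  have hrev : (List.ofFn fun j => S (α j * -h)).reverse = List.ofFn fun j => S (α j * -h) := by
    simp only [List.ofFn_eq_map, ← List.map_reverse, List.finRange_reverse, List.map_map,
      Function.comp_def, hα]
  rw [hrev, List.ofFn_eq_map, List.ofFn_eq_map]
  refine List.prod_map_mul_prod_map_reverse_eq_one _ fun j => ?_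
  simpa [mul_neg] using hS (-(α j * h))

theorem Matrix.norm_mul_le_card_mul {l m n α : Type*} [Fintype l] [Fintype m] [Fintype n]
    [NormedRing α] (M : Matrix l m α) (N : Matrix m n α) :
    ‖M * N‖ ≤ Fintype.card m * ‖M‖ * ‖N‖ := by
  refine (Matrix.norm_le_iff (by positivity)).2 fun i j => ?_
  calc ‖(M * N) i j‖ ≤ ∑ k, ‖M i k * N k j‖ := norm_sum_le _ _
    _ ≤ ∑ _k : m, ‖M‖ * ‖N‖ := Finset.sum_le_sum fun k _ => (norm_mul_le _ _).trans
        (mul_le_mul (norm_entry_le_entrywise_sup_norm M) (norm_entry_le_entrywise_sup_norm N)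
          (norm_nonneg _) (norm_nonneg _))
    _ = Fintype.card m * ‖M‖ * ‖N‖ := by simp [mul_assoc]

theorem Matrix.exp_map_ofReal {m : Type*} [Fintype m] [DecidableEq m] (A : Matrix m m ℝ) :
    exp (A.map Complex.ofReal) = (exp A).map Complex.ofReal := by
  -- `map_exp` needs normed rings; the `L∞` operator norms induce the usual topologies.
  let : NormedRing (Matrix m m ℝ) := Matrix.linftyOpNormedRing
  let : NormedAlgebra ℝ (Matrix m m ℝ) := Matrix.linftyOpNormedAlgebra
  let : NormedAlgebra ℚ (Matrix m m ℝ) := Matrix.linftyOpNormedAlgebra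
  have : @CompleteSpace (Matrix m m ℝ)
      (PseudoMetricSpace.toUniformSpace (self := SeminormedRing.toPseudoMetricSpace)) :=
    FiniteDimensional.complete ℝ _
  let : NormedRing (Matrix m m ℂ) := Matrix.linftyOpNormedRing
  exact (map_exp Complex.ofRealHom.mapMatrix
    (continuous_id.matrix_map Complex.continuous_ofReal) A).symm

section RealPart

variable {m n : Type*} [Fintype m] [Fintype n]

theorem Matrix.norm_map_re_le (M : Matrix m n ℂ) : ‖M.map Complex.re‖ ≤ ‖M‖ :=
  (norm_le_iff (norm_nonneg _)).2 fun i j => by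
    simpa only [map_apply, Real.norm_eq_abs] using
      (Complex.abs_re_le_norm (M i j)).trans (norm_entry_le_entrywise_sup_norm M)

theorem Matrix.norm_sub_map_conj_le (M : Matrix m n ℂ) (E : Matrix m n ℝ) :
    ‖M - M.map (starRingEnd ℂ)‖ ≤ 2 * ‖M - E.map Complex.ofReal‖ := by
  refine (norm_le_iff (by positivity)).2 fun i j => ?_
  have hre : M i j - starRingEnd ℂ (M i j) =
      (M i j - E i j) - starRingEnd ℂ (M i j - E i j) := by
    rw [map_sub, Complex.conj_ofReal, sub_sub_sub_cancel_right]
  calc ‖(M - M.map (starRingEnd ℂ)) i j‖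
      ≤ ‖M i j - E i j‖ + ‖starRingEnd ℂ (M i j - E i j)‖ := by
        rw [sub_apply, map_apply, hre]; exact norm_sub_le _ _
    _ = 2 * ‖(M - E.map Complex.ofReal) i j‖ := by
        rw [Complex.norm_conj, sub_apply, map_apply]; ring
    _ ≤ 2 * ‖M - E.map Complex.ofReal‖ := by gcongr; exact norm_entry_le_entrywise_sup_norm _

omit [Fintype m] [Fintype n] in
theorem Matrix.map_re_map_ofReal (M : Matrix m n ℂ) :
    (M.map Complex.re).map Complex.ofReal = (2 : ℂ)⁻¹ • (M + M.map (starRingEnd ℂ)) := by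
  ext i j
  simp [Complex.add_conj]

theorem Matrix.norm_map_re_mul_map_re_sub_one_le [DecidableEq m] {X Y : Matrix m m ℂ}
    (hXY : X * Y = 1) :
    ‖X.map Complex.re * Y.map Complex.re - 1‖ ≤
      Fintype.card m / 4 * (‖X - X.map (starRingEnd ℂ)‖ * ‖Y - Y.map (starRingEnd ℂ)‖) := by
  set X' := X.map (starRingEnd ℂ)
  set Y' := Y.map (starRingEnd ℂ)
  have hXY' : X' * Y' = 1 := by
    rw [← Matrix.map_mul, hXY, Matrix.map_one _ (map_zero _) (map_one _)]
  have hsum : (X + X') * (Y + Y') = (4 : ℂ) • 1 - (X - X') * (Y - Y') := by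
    refine eq_sub_of_add_eq ?_
    calc (X + X') * (Y + Y') + (X - X') * (Y - Y') = X * Y + X * Y + (X' * Y' + X' * Y') := by
          noncomm_ring
      _ = (4 : ℂ) • 1 := by rw [hXY, hXY']; module
  have hcomplex : (X.map Complex.re * Y.map Complex.re - 1).map Complex.ofReal =
      -((4 : ℂ)⁻¹ • ((X - X') * (Y - Y'))) := by
    change Complex.ofRealHom.mapMatrix (X.map Complex.re * Y.map Complex.re - 1) = _
    rw [map_sub, map_mul, map_one]
    change (X.map Complex.re).map Complex.ofReal * (Y.map Complex.re).map Complex.ofReal - 1 = _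
    rw [map_re_map_ofReal, map_re_map_ofReal, smul_mul_smul_comm, hsum]
    module
  calc ‖X.map Complex.re * Y.map Complex.re - 1‖
      = ‖(4 : ℂ)⁻¹ • ((X - X') * (Y - Y'))‖ := by
        rw [← norm_map_eq _ _ Complex.norm_real, hcomplex, norm_neg]
    _ ≤ 4⁻¹ * (Fintype.card m * ‖X - X'‖ * ‖Y - Y'‖) := by
        rw [norm_smul, norm_inv, Complex.norm_ofNat]; gcongr; exact norm_mul_le_card_mul _ _
    _ = Fintype.card m / 4 * (‖X - X'‖ * ‖Y - Y'‖) := by ring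

end RealPart

namespace Asymptotics.IsBigO

variable {α m n : Type*} [Fintype m] [Fintype n] {l : Filter α} {g : α → ℝ}
  {f : α → Matrix m n ℂ} {e : α → Matrix m n ℝ}

theorem map_re_sub (hf : (fun x => f x - (e x).map Complex.ofReal) =O[l] g) :
    (fun x => (f x).map Complex.re - e x) =O[l] g := by
  refine (IsBigO.of_bound 1 (Eventually.of_forall fun x => ?_)).trans hf
  have hre : (f x).map Complex.re - e x = (f x - (e x).map Complex.ofReal).map Complex.re := by
    ext i j; simp
  rw [one_mul, hre]
  exact norm_map_re_le _

theorem sub_map_conj (hf : (fun x => f x - (e x).map Complex.ofReal) =O[l] g) :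
    (fun x => f x - (f x).map (starRingEnd ℂ)) =O[l] g :=
  (IsBigO.of_bound 2 (Eventually.of_forall fun x => norm_sub_map_conj_le (f x) (e x))).trans hf

end Asymptotics.IsBigO

theorem isBigO_map_re_neg_mul_map_re_sub_one {m : Type*} [Fintype m] [DecidableEq m]
    {P : ℝ → Matrix m m ℂ} {E : ℝ → Matrix m m ℝ} {k : ℕ} (hinv : ∀ h, P (-h) * P h = 1)
    (hP : (fun h => P h - (E h).map Complex.ofReal) =O[𝓝 0] fun h => h ^ k) :
    (fun h => (P (-h)).map Complex.re * (P h).map Complex.re - 1) =O[𝓝 0]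
      fun h => h ^ (2 * k) := by
  have hD := hP.sub_map_conj
  have hDneg : (fun h => P (-h) - (P (-h)).map (starRingEnd ℂ)) =O[𝓝 0] fun h => h ^ k :=
    (hD.comp_tendsto (continuous_neg.tendsto' 0 0 neg_zero)).trans
      (IsBigO.of_bound 1 (Eventually.of_forall fun h => by simp))
  have hbound : (fun h => (P (-h)).map Complex.re * (P h).map Complex.re - 1) =O[𝓝 0]
      fun h => ‖P (-h) - (P (-h)).map (starRingEnd ℂ)‖ * ‖P h - (P h).map (starRingEnd ℂ)‖ :=
    IsBigO.of_bound (Fintype.card m / 4) (Eventually.of_forall fun h => by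
      rw [Real.norm_of_nonneg (by positivity)]
      exact norm_map_re_mul_map_re_sub_one_le (hinv h))
  simpa only [two_mul, pow_add] using hbound.trans (hDneg.norm_left.mul hD.norm_left)

theorem palindromic_real_part_order_and_pseudo_symmetry
    (d s n : ℕ)
    (A : Matrix (Fin d) (Fin d) ℝ)
    (S : ℂ → Matrix (Fin d) (Fin d) ℂ)
    -- `S` is time-symmetric
    (hTS : ∀ z : ℂ, S z * S (-z) = 1)
    -- left-right palindromic coefficients with `∑ α_j = 1`
    (α : Fin s → ℂ)
    (hpal : ∀ j : Fin s, α (Fin.rev j) = α j)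
    -- the composition `P h = S (α_s h) ⋯ S (α_1 h)`
    (P : ℝ → Matrix (Fin d) (Fin d) ℂ)
    (hP : ∀ h : ℝ, P h = ((List.ofFn fun j : Fin s => S (α j * (h : ℂ))).reverse).prod)
    -- ... is of order `2n`
    (hPord : (fun h : ℝ => P h - exp ((h : ℂ) • A.map Complex.ofReal))
      =O[nhds 0] fun h : ℝ => h ^ (2 * n + 1))
    -- `R h` is the entrywise real part of `P h`
    (R : ℝ → Matrix (Fin d) (Fin d) ℝ)
    (hR : ∀ h : ℝ, R h = (P h).map Complex.re) :
    ((fun h : ℝ => R h - exp (h • A)) =O[nhds 0] fun h : ℝ => h ^ (2 * n + 1)) ∧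
      ((fun h : ℝ => R (-h) * R h - 1) =O[nhds 0] fun h : ℝ => h ^ (4 * n + 2)) := by
  have hexp (h : ℝ) : exp ((h : ℂ) • A.map Complex.ofReal) = (exp (h • A)).map Complex.ofReal := by
    rw [← exp_map_ofReal]
    congr 1
    ext i j
    simp
  have hPE : (fun h : ℝ => P h - (exp (h • A)).map Complex.ofReal) =O[𝓝 0]
      fun h : ℝ => h ^ (2 * n + 1) := by
    simpa only [hexp] using hPord
  have hinv (h : ℝ) : P (-h) * P h = 1 := by
    rw [hP, hP, Complex.ofReal_neg]
    exact prod_ofFn_neg_mul_prod_ofFn_eq_one hTS hpal _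
  refine ⟨by simpa only [hR] using hPE.map_re_sub, ?_⟩
  simpa only [hR, show 4 * n + 2 = 2 * (2 * n + 1) by ring] using
    isBigO_map_re_neg_mul_map_re_sub_one hinv hPE
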